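/- (Marsden identity in recursion-matrix form, cubic case.) For all x, y ∈ ℝ², R1(β(x))·R2(β(x))·R3(β(x))·ψ3(y) = (1 − x·y)³·𝟙, where 𝟙 ∈ ℝ^{12} is the all-ones vector and x·y is the Euclidean inner product. -/

import Mathlib

/-- Euclidean inner product on `ℝ²`. -/
def dotR2 (x y : ℝ × ℝ) : ℝ := x.1 * y.1 + x.2 * y.2

/-- The linear polynomial `c_p(y) = 1 − p·y` attached to a point `p`. -/
noncomputable def cpl (p y : ℝ × ℝ) : ℝ := 1 - dotR2 p y

/-- The 12×10 recursion matrix `R1` (with `γj = 2 βj − c`; the paper's `R1` is `c = 1`,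
the derivative matrix `U1` is `c = 0`). -/
noncomputable def R1g (b1 b2 b3 c : ℝ) : Matrix (Fin 12) (Fin 10) ℝ :=
  !![2*b1 - c, 0, 0, 0, 0, 2*(b3 - b2), 4*b2, 0, 0, 0;
     2*b1 - c, 0, 0, 2*(b2 - b3), 0, 0, 4*b3, 0, 0, 0;
     0, 2*b2 - c, 0, 2*(b1 - b3), 0, 0, 0, 4*b3, 0, 0;
     0, 2*b2 - c, 0, 0, 2*(b3 - b1), 0, 0, 4*b1, 0, 0;
     0, 0, 2*b3 - c, 0, 2*(b2 - b1), 0, 0, 0, 4*b1, 0;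
     0, 0, 2*b3 - c, 0, 0, 2*(b1 - b2), 0, 0, 4*b2, 0;
     0, 0, 0, 0, 0, 2*(b3 - b2), 4*(b1 - b3), 0, 0, -3*(2*b1 - c);
     0, 0, 0, 2*(b2 - b3), 0, 0, 4*(b1 - b2), 0, 0, -3*(2*b1 - c);
     0, 0, 0, 2*(b1 - b3), 0, 0, 0, 4*(b2 - b1), 0, -3*(2*b2 - c);
     0, 0, 0, 0, 2*(b3 - b1), 0, 0, 4*(b2 - b3), 0, -3*(2*b2 - c);
     0, 0, 0, 0, 2*(b2 - b1), 0, 0, 0, 4*(b3 - b2), -3*(2*b3 - c);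
     0, 0, 0, 0, 0, 2*(b1 - b2), 0, 0, 4*(b3 - b1), -3*(2*b3 - c)]

/-- The 10×12 recursion matrix `R2` (with `γj = 2 βj − c`). -/
noncomputable def R2g (b1 b2 b3 c : ℝ) : Matrix (Fin 10) (Fin 12) ℝ :=
  !![2*b1 - c, 2*b2, 0, 0, 0, 0, 0, 0, 0, 0, 0, 2*b3;
     0, 0, 0, 2*b1, 2*b2 - c, 2*b3, 0, 0, 0, 0, 0, 0;
     0, 0, 0, 0, 0, 0, 0, 2*b2, 2*b3 - c, 2*b1, 0, 0;
     0, b1 - b3, 3*b3, b2 - b3, 0, 0, 0, 0, 0, 0, 0, 0;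
     0, 0, 0, 0, 0, b2 - b1, 3*b1, b3 - b1, 0, 0, 0, 0;
     0, 0, 0, 0, 0, 0, 0, 0, 0, b3 - b2, 3*b2, b1 - b2;
     0, (b1 - b3)/2, 3*b2/2, 0, 0, 0, 0, 0, 0, 0, 3*b3/2, (b1 - b2)/2;
     0, 0, 3*b1/2, (b2 - b3)/2, 0, (b2 - b1)/2, 3*b3/2, 0, 0, 0, 0, 0;
     0, 0, 0, 0, 0, 0, 3*b2/2, (b3 - b1)/2, 0, (b3 - b2)/2, 3*b1/2, 0;
     0, 0, -(2*b3 - c), 0, 0, 0, -(2*b1 - c), 0, 0, 0, -(2*b2 - c), 0]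

/-- The 12×16 recursion matrix `R3` (with `γj = 2 βj − c`). -/
noncomputable def R3g (b1 b2 b3 c : ℝ) : Matrix (Fin 12) (Fin 16) ℝ :=
  !![2*b1 - c, 2*b2, 0, 0, 0, 0, 0, 0, 0, 0, 0, 2*b3, 0, 0, 0, 0;
     0, b1 - b3, b2, 0, 0, 0, 0, 0, 0, 0, 0, 0, 2*b3, 0, 0, 0;
     0, 0, (b1 + b2)/3, 0, 0, 0, b3/3, 0, 0, 0, b3/3, 0, 2*b1/3, 2*b2/3, 0, b3/3;
     0, 0, b1, b2 - b3, 0, 0, 0, 0, 0, 0, 0, 0, 0, 2*b3, 0, 0;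
     0, 0, 0, 2*b1, 2*b2 - c, 2*b3, 0, 0, 0, 0, 0, 0, 0, 0, 0, 0;
     0, 0, 0, 0, 0, b2 - b1, b3, 0, 0, 0, 0, 0, 0, 2*b1, 0, 0;
     0, 0, b1/3, 0, 0, 0, (b2 + b3)/3, 0, 0, 0, b1/3, 0, 0, 2*b2/3, 2*b3/3, b1/3;
     0, 0, 0, 0, 0, 0, b2, b3 - b1, 0, 0, 0, 0, 0, 0, 2*b1, 0;
     0, 0, 0, 0, 0, 0, 0, 2*b2, 2*b3 - c, 2*b1, 0, 0, 0, 0, 0, 0;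
     0, 0, 0, 0, 0, 0, 0, 0, 0, b3 - b2, b1, 0, 0, 0, 2*b2, 0;
     0, 0, b2/3, 0, 0, 0, b2/3, 0, 0, 0, (b1 + b3)/3, 0, 2*b1/3, 0, 2*b3/3, b2/3;
     0, 0, 0, 0, 0, 0, 0, 0, 0, 0, b3, b1 - b2, 2*b2, 0, 0, 0]

/-- The recursion matrix `R1(β)`. -/
noncomputable def R1 (b1 b2 b3 : ℝ) : Matrix (Fin 12) (Fin 10) ℝ := R1g b1 b2 b3 1
/-- The recursion matrix `R2(β)`. -/
noncomputable def R2 (b1 b2 b3 : ℝ) : Matrix (Fin 10) (Fin 12) ℝ := R2g b1 b2 b3 1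
/-- The recursion matrix `R3(β)`. -/
noncomputable def R3 (b1 b2 b3 : ℝ) : Matrix (Fin 12) (Fin 16) ℝ := R3g b1 b2 b3 1

/-!
Since `c_p(y) = 1 − p·y` is affine in `p`, every entry of `ψ3(y)` is a cubic form in
`c1, c2, c3`, and so are the entries of the analogous vectors `ψ2(y)` and `ψ1(y)` of degrees 2
and 1; moreover `1 − x·y = ℓ := β1 c1 + β2 c2 + β3 c3`. Each recursion matrix lowers the degree
by one factor of `ℓ`: `R3 ψ3 = ℓ ψ2`, `R2 ψ2 = ℓ ψ1` and `R1 ψ1 = ℓ 𝟙`. These are polynomial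
identities in `β` and `c` once `β1 + β2 + β3 = 1` is used to make `γj = 2βj − 1` homogeneous.
-/

lemma cpl_affineCombination {p q r : ℝ × ℝ} {a b c : ℝ} (habc : a + b + c = 1) (y : ℝ × ℝ) :
    cpl (a • p + b • q + c • r) y = a * cpl p y + b * cpl q y + c * cpl r y := by
  simp only [cpl, dotR2, Prod.fst_add, Prod.snd_add, Prod.smul_fst, Prod.smul_snd, smul_eq_mul]
  linear_combination -habc

lemma cpl_midpoint (p q y : ℝ × ℝ) :
    cpl ((2⁻¹ : ℝ) • (p + q)) y = (cpl p y + cpl q y) / 2 := by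
  simp only [cpl, dotR2, Prod.fst_add, Prod.snd_add, Prod.smul_fst, Prod.smul_snd, smul_eq_mul]
  ring

open Matrix

namespace Marsden

/- At `cj = c_{pj}(y)` (`j = 1, 2, 3`), `psi3` is `ψ3(y)`, and the local `c4, c5, c6`, the three
averages in `psi1` and `c10` are `c_p(y)` at the edge midpoints `p4, p5, p6`, at
`(p4 + p6)/2, (p4 + p5)/2, (p5 + p6)/2` and at the centroid. -/

noncomputable def psi1 (c1 c2 c3 : ℝ) : Fin 10 → ℝ :=
  let c4 := (c1 + c2) / 2; let c5 := (c2 + c3) / 2; let c6 := (c3 + c1) / 2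
  ![c1, c2, c3, c4, c5, c6, (c4 + c6) / 2, (c4 + c5) / 2, (c5 + c6) / 2, (c1 + c2 + c3) / 3]

noncomputable def psi2 (c1 c2 c3 : ℝ) : Fin 12 → ℝ :=
  let c4 := (c1 + c2) / 2; let c5 := (c2 + c3) / 2; let c6 := (c3 + c1) / 2
  let c10 := (c1 + c2 + c3) / 3
  ![c1 ^ 2, c1 * c4, c4 * c10, c2 * c4, c2 ^ 2, c2 * c5, c5 * c10, c3 * c5, c3 ^ 2, c3 * c6,
    c6 * c10, c1 * c6]

noncomputable def psi3 (c1 c2 c3 : ℝ) : Fin 16 → ℝ :=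
  let c4 := (c1 + c2) / 2; let c5 := (c2 + c3) / 2; let c6 := (c3 + c1) / 2
  ![c1 ^ 3, c1 ^ 2 * c4, c1 * c2 * c4, c2 ^ 2 * c4, c2 ^ 3, c2 ^ 2 * c5, c2 * c3 * c5,
    c3 ^ 2 * c5, c3 ^ 3, c3 ^ 2 * c6, c1 * c3 * c6, c1 ^ 2 * c6, c1 * c4 * c6, c2 * c4 * c5,
    c3 * c5 * c6, c1 * c2 * c3]

variable {b1 b2 b3 : ℝ}

lemma R3_mulVec_psi3 (hb : b1 + b2 + b3 = 1) (c1 c2 c3 : ℝ) :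
    R3 b1 b2 b3 *ᵥ psi3 c1 c2 c3 = (b1 * c1 + b2 * c2 + b3 * c3) • psi2 c1 c2 c3 := by
  obtain rfl : b3 = 1 - b1 - b2 := by linarith
  ext i
  fin_cases i <;>
    simp only [R3, R3g, psi3, psi2, mulVec, dotProduct, Fin.sum_univ_succ, Fin.sum_univ_zero,
      of_apply, cons_val', cons_val, cons_val_zero, cons_val_one, cons_val_succ, cons_val_fin_one,
      Fin.isValue, Fin.reduceFinMk, Fin.zero_eta, Fin.mk_one, Pi.smul_apply, smul_eq_mul] <;>
    ring

lemma R2_mulVec_psi2 (hb : b1 + b2 + b3 = 1) (c1 c2 c3 : ℝ) :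
    R2 b1 b2 b3 *ᵥ psi2 c1 c2 c3 = (b1 * c1 + b2 * c2 + b3 * c3) • psi1 c1 c2 c3 := by
  obtain rfl : b3 = 1 - b1 - b2 := by linarith
  ext i
  fin_cases i <;>
    simp only [R2, R2g, psi2, psi1, mulVec, dotProduct, Fin.sum_univ_succ, Fin.sum_univ_zero,
      of_apply, cons_val', cons_val, cons_val_zero, cons_val_one, cons_val_succ, cons_val_fin_one,
      Fin.isValue, Fin.reduceFinMk, Fin.zero_eta, Fin.mk_one, Pi.smul_apply, smul_eq_mul] <;>
    ring

lemma R1_mulVec_psi1 (hb : b1 + b2 + b3 = 1) (c1 c2 c3 : ℝ) :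
    R1 b1 b2 b3 *ᵥ psi1 c1 c2 c3 = (b1 * c1 + b2 * c2 + b3 * c3) • 1 := by
  obtain rfl : b3 = 1 - b1 - b2 := by linarith
  ext i
  fin_cases i <;>
    simp only [R1, R1g, psi1, mulVec, dotProduct, Fin.sum_univ_succ, Fin.sum_univ_zero,
      of_apply, cons_val', cons_val, cons_val_zero, cons_val_one, cons_val_succ, cons_val_fin_one,
      Fin.isValue, Fin.reduceFinMk, Fin.zero_eta, Fin.mk_one, Pi.smul_apply, Pi.one_apply,
      smul_eq_mul] <;>
    ring

lemma R1_mul_R2_mul_R3_mulVec_psi3 (hb : b1 + b2 + b3 = 1) (c1 c2 c3 : ℝ) :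
    (R1 b1 b2 b3 * R2 b1 b2 b3 * R3 b1 b2 b3) *ᵥ psi3 c1 c2 c3
      = (b1 * c1 + b2 * c2 + b3 * c3) ^ 3 • 1 := by
  rw [← mulVec_mulVec, ← mulVec_mulVec, R3_mulVec_psi3 hb, mulVec_smul, R2_mulVec_psi2 hb,
    mulVec_smul, mulVec_smul, R1_mulVec_psi1 hb, smul_smul, smul_smul, pow_three']

end Marsden

theorem marsden_cubic_general
    (p1 p2 p3 : ℝ × ℝ)
    (p4 p5 p6 : ℝ × ℝ)
    (h4 : p4 = (2⁻¹ : ℝ) • (p1 + p2))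
    (h5 : p5 = (2⁻¹ : ℝ) • (p2 + p3))
    (h6 : p6 = (2⁻¹ : ℝ) • (p3 + p1))
    (x y : ℝ × ℝ) (b1 b2 b3 : ℝ)
    (hx : x = b1 • p1 + b2 • p2 + b3 • p3)
    (hb : b1 + b2 + b3 = 1) :
    (R1 b1 b2 b3 * R2 b1 b2 b3 * R3 b1 b2 b3).mulVec
      ![cpl p1 y ^ 3, cpl p1 y ^ 2 * cpl p4 y, cpl p1 y * cpl p2 y * cpl p4 y,
        cpl p2 y ^ 2 * cpl p4 y, cpl p2 y ^ 3, cpl p2 y ^ 2 * cpl p5 y,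
        cpl p2 y * cpl p3 y * cpl p5 y, cpl p3 y ^ 2 * cpl p5 y, cpl p3 y ^ 3,
        cpl p3 y ^ 2 * cpl p6 y, cpl p1 y * cpl p3 y * cpl p6 y, cpl p1 y ^ 2 * cpl p6 y,
        cpl p1 y * cpl p4 y * cpl p6 y, cpl p2 y * cpl p4 y * cpl p5 y,
        cpl p3 y * cpl p5 y * cpl p6 y, cpl p1 y * cpl p2 y * cpl p3 y]
      = fun _ : Fin 12 => (1 - dotR2 x y) ^ 3 := by
  have hℓ : 1 - dotR2 x y = b1 * cpl p1 y + b2 * cpl p2 y + b3 * cpl p3 y := by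
    rw [← cpl, hx, cpl_affineCombination hb]
  rw [h4, h5, h6, cpl_midpoint, cpl_midpoint, cpl_midpoint, hℓ]
  funext i
  exact (congrFun (Marsden.R1_mul_R2_mul_R3_mulVec_psi3 hb (cpl p1 y) (cpl p2 y) (cpl p3 y))
    i).trans (mul_one _)

/-- Marsden identity, cubic:
`R1(β(x)) R2(β(x)) R3(β(x)) ψ3(y) = (1 − x·y)³ 𝟙`. -/
theorem marsden_cubic
    (p1 p2 p3 : ℝ × ℝ)
    (hind : AffineIndependent ℝ ![p1, p2, p3])
    (p4 p5 p6 p7 p8 p9 p10 : ℝ × ℝ)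
    (h4 : p4 = (2⁻¹ : ℝ) • (p1 + p2))
    (h5 : p5 = (2⁻¹ : ℝ) • (p2 + p3))
    (h6 : p6 = (2⁻¹ : ℝ) • (p3 + p1))
    (h7 : p7 = (2⁻¹ : ℝ) • (p4 + p6))
    (h8 : p8 = (2⁻¹ : ℝ) • (p4 + p5))
    (h9 : p9 = (2⁻¹ : ℝ) • (p5 + p6))
    (h10 : p10 = (3⁻¹ : ℝ) • (p1 + p2 + p3))
    (x y : ℝ × ℝ) (b1 b2 b3 : ℝ)
    (hx : x = b1 • p1 + b2 • p2 + b3 • p3)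
    (hb : b1 + b2 + b3 = 1) :
    (R1 b1 b2 b3 * R2 b1 b2 b3 * R3 b1 b2 b3).mulVec
      ![cpl p1 y ^ 3, cpl p1 y ^ 2 * cpl p4 y, cpl p1 y * cpl p2 y * cpl p4 y,
        cpl p2 y ^ 2 * cpl p4 y, cpl p2 y ^ 3, cpl p2 y ^ 2 * cpl p5 y,
        cpl p2 y * cpl p3 y * cpl p5 y, cpl p3 y ^ 2 * cpl p5 y, cpl p3 y ^ 3,
        cpl p3 y ^ 2 * cpl p6 y, cpl p1 y * cpl p3 y * cpl p6 y, cpl p1 y ^ 2 * cpl p6 y,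
        cpl p1 y * cpl p4 y * cpl p6 y, cpl p2 y * cpl p4 y * cpl p5 y,
        cpl p3 y * cpl p5 y * cpl p6 y, cpl p1 y * cpl p2 y * cpl p3 y]
      = fun _ : Fin 12 => (1 - dotR2 x y) ^ 3 :=
  marsden_cubic_general p1 p2 p3 p4 p5 p6 h4 h5 h6 x y b1 b2 b3 hx hb
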